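/- If bₙ → ∞ with bₙ ≤ √((2 − ε) log n) for some ε ∈ (0,1), and |P(Tₙ ≥ x) − Φ(−x)| ≤ C/n uniformly in x for some constant C, then P(Tₙ ≥ bₙ)/Φ(−bₙ) → 1 as n → ∞. -/

import Mathlib

open MeasureTheory Filter Topology

noncomputable def stdGaussPdf (x : ℝ) : ℝ :=
  (Real.sqrt (2 * Real.pi))⁻¹ * Real.exp (-x ^ 2 / 2)

noncomputable def stdGaussCdf (x : ℝ) : ℝ := ∫ t in Set.Iic x, stdGaussPdf t

/-! The crude tail bound `Φ(-b) ≥ φ(b + 1)` (the density is at least `φ(b + 1)` on the unit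
interval `[-b - 1, -b]`) gives `|P(Tₙ ≥ bₙ) / Φ(-bₙ) - 1| ≤ C √(2π) exp((bₙ + 1)² / 2) / n`.
Since `bₙ² ≤ (2 - ε) log n`, AM-GM gives `(bₙ + 1)² / 2 ≤ (1 - ε / 4) log n + O(1)`, so the
bound is `O(n^{-ε/4})`. -/

lemma stdGaussPdf_pos (x : ℝ) : 0 < stdGaussPdf x := by
  unfold stdGaussPdf
  positivity

lemma inv_stdGaussPdf (x : ℝ) :
    (stdGaussPdf x)⁻¹ = Real.sqrt (2 * Real.pi) * Real.exp (x ^ 2 / 2) := by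
  rw [stdGaussPdf, mul_inv, inv_inv, neg_div, Real.exp_neg, inv_inv]

lemma integrable_stdGaussPdf : Integrable stdGaussPdf := by
  refine ((integrable_exp_neg_mul_sq (b := 2⁻¹) (by norm_num)).const_mul
    (Real.sqrt (2 * Real.pi))⁻¹).congr (Eventually.of_forall fun x => ?_)
  simp only [stdGaussPdf]
  ring_nf

lemma stdGaussPdf_add_one_le_stdGaussCdf_neg {b : ℝ} (hb : 0 ≤ b) :
    stdGaussPdf (b + 1) ≤ stdGaussCdf (-b) := by
  have hpdf_le : ∀ t ∈ Set.Icc (-b - 1) (-b), stdGaussPdf (b + 1) ≤ stdGaussPdf t := by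
    intro t ⟨ht₁, ht₂⟩
    unfold stdGaussPdf
    gcongr _ * Real.exp ?_
    nlinarith
  calc stdGaussPdf (b + 1) = ∫ _ in Set.Icc (-b - 1) (-b), stdGaussPdf (b + 1) := by
        simp [Real.volume_real_Icc]
    _ ≤ ∫ t in Set.Icc (-b - 1) (-b), stdGaussPdf t :=
        setIntegral_mono_on (integrableOn_const measure_Icc_lt_top.ne)
          integrable_stdGaussPdf.integrableOn measurableSet_Icc hpdf_le
    _ ≤ stdGaussCdf (-b) :=
        setIntegral_mono_set integrable_stdGaussPdf.integrableOn
          (Eventually.of_forall fun t => (stdGaussPdf_pos t).le)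
          (Eventually.of_forall fun _ ht => ht.2)

lemma abs_div_sub_one_le {p q m δ : ℝ} (hm : 0 < m) (hmq : m ≤ q) (h : |p - q| ≤ δ) :
    |p / q - 1| ≤ δ / m := by
  have hq : 0 < q := hm.trans_le hmq
  rw [div_sub_one hq.ne', abs_div, abs_of_pos hq]
  calc |p - q| / q ≤ δ / q := by gcongr
    _ ≤ δ / m := div_le_div_of_nonneg_left ((abs_nonneg _).trans h) hm hmq

lemma add_one_sq_half_sub_le {ε b L : ℝ} (hε₀ : 0 < ε) (hε₂ : ε < 2) (hL : 0 ≤ L)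
    (hb : 0 ≤ b) (hbL : b ≤ Real.sqrt ((2 - ε) * L)) :
    (b + 1) ^ 2 / 2 - L ≤ -(ε / 4) * L + ((2 - ε) / ε + 1 / 2) := by
  set s := Real.sqrt ((2 - ε) * L)
  have hs : s ^ 2 = (2 - ε) * L := Real.sq_sqrt (mul_nonneg (by linarith) hL)
  -- AM-GM in the form `(ε s - 2 (2 - ε))² ≥ 0`
  -- AM-GM: `(ε s - 2 (2 - ε))² ≥ 0`
  have hamgm : 4 * ε * s ≤ ε ^ 2 * L + 4 * (2 - ε) :=
    le_of_mul_le_mul_left (by nlinarith [sq_nonneg (ε * s - 2 * (2 - ε))]) (sub_pos.2 hε₂)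
  have hs_le : s ≤ ε / 4 * L + (2 - ε) / ε := by
    have : ε / 4 * L + (2 - ε) / ε = (ε ^ 2 * L + 4 * (2 - ε)) / (4 * ε) := by
      field_simp
    rw [this, le_div_iff₀ (by positivity)]
    linarith
  have hsq : (b + 1) ^ 2 ≤ (s + 1) ^ 2 := by gcongr
  nlinarith

lemma tendsto_exp_add_one_sq_half_div_natCast {ε : ℝ} {b : ℕ → ℝ} (hε₀ : 0 < ε) (hε₂ : ε < 2)
    (hb : ∀ᶠ n in atTop, 0 ≤ b n) (hbn : ∀ n : ℕ, b n ≤ Real.sqrt ((2 - ε) * Real.log n)) :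
    Tendsto (fun n : ℕ => Real.exp ((b n + 1) ^ 2 / 2) / n) atTop (𝓝 0) := by
  have hlog : Tendsto (fun n : ℕ => Real.log n) atTop atTop :=
    Real.tendsto_log_atTop.comp tendsto_natCast_atTop_atTop
  have hlin : Tendsto (fun n : ℕ => -(ε / 4) * Real.log n + ((2 - ε) / ε + 1 / 2)) atTop atBot :=
    tendsto_atBot_add_const_right _ _ (hlog.const_mul_atTop_of_neg (by linarith))
  have hexponent : Tendsto (fun n : ℕ => (b n + 1) ^ 2 / 2 - Real.log n) atTop atBot := by
    refine tendsto_atBot_mono' _ ?_ hlin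
    filter_upwards [hb, eventually_ge_atTop 1] with n hb0 hn
    exact add_one_sq_half_sub_le hε₀ hε₂ (Real.log_natCast_nonneg n) hb0 (hbn n)
  refine (Real.tendsto_exp_atBot.comp hexponent).congr' ?_
  filter_upwards [eventually_ge_atTop 1] with n hn
  rw [Function.comp_apply, Real.exp_sub, Real.exp_log (by exact_mod_cast hn)]

/-- If `bₙ → ∞` with `bₙ ≤ √((2 − ε) log n)` for some `ε ∈ (0,1)`, and
`|P(Tₙ ≥ x) − Φ(−x)| ≤ C/n` uniformly in `x`, then `P(Tₙ ≥ bₙ)/Φ(−bₙ) → 1`. -/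
theorem stmt12 {Ω : Type*} [MeasurableSpace Ω] (P : Measure Ω) [IsProbabilityMeasure P]
    (T : ℕ → Ω → ℝ) (b : ℕ → ℝ) (ε : ℝ) (hε : ε ∈ Set.Ioo (0 : ℝ) 1)
    (hb : Filter.Tendsto b Filter.atTop Filter.atTop)
    (hble : ∀ n : ℕ, b n ≤ Real.sqrt ((2 - ε) * Real.log n))
    (C : ℝ)
    (hunif : ∀ (n : ℕ) (x : ℝ),
      |(P {ω | x ≤ T n ω}).toReal - stdGaussCdf (-x)| ≤ C / n) :
    Filter.Tendsto
      (fun n => (P {ω | b n ≤ T n ω}).toReal / stdGaussCdf (-(b n)))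
      Filter.atTop (nhds 1) := by
  have hb₀ : ∀ᶠ n in atTop, 0 ≤ b n := hb.eventually_ge_atTop 0
  have hbound : Tendsto (fun n : ℕ => C * Real.sqrt (2 * Real.pi) *
      (Real.exp ((b n + 1) ^ 2 / 2) / n)) atTop (𝓝 0) := by
    simpa using (tendsto_exp_add_one_sq_half_div_natCast hε.1 (by linarith [hε.2]) hb₀
      hble).const_mul (C * Real.sqrt (2 * Real.pi))
  rw [tendsto_iff_norm_sub_tendsto_zero]
  refine squeeze_zero' (Eventually.of_forall fun _ => norm_nonneg _) ?_ hbound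
  filter_upwards [hb₀] with n hbn
  calc _ ≤ C / n / stdGaussPdf (b n + 1) :=
        abs_div_sub_one_le (stdGaussPdf_pos _) (stdGaussPdf_add_one_le_stdGaussCdf_neg hbn)
          (hunif n (b n))
    _ = _ := by rw [div_eq_mul_inv _ (stdGaussPdf _), inv_stdGaussPdf]; ring
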